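/- Let p be a prime and a a positive integer, let A be the adjacency matrix of the modified divisor prime graph G*_Dp(p^a), and let μ = 1/(a+1). If B is a positive semidefinite real matrix with B² = (A − μI)², then for every i with 1 ≤ i ≤ a, the diagonal entry of B at the vertex p^i equals (2a² + 2a + 1)/(a(a+1)√(4a+1)) + (a−1)/(a(a+1)). -/

import Mathlib

/-!
Let `e` be the indicator of the vertex `1` and `f` that of the other `a` vertices. Then
`A = e eᵀ + e fᵀ + f eᵀ` with `e ⟂ f` and `‖f‖² = a`, so `A³ = A² + a A` and the spectrum
of `A` lies in `{0, (1 ± √(4a+1))/2}`. A positive semidefinite `B` with `B² = (A - μ)²` is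
the absolute value `|A - μ| = cfc (|· - μ|) A`, and on those three points `|t - μ|` agrees
with a quadratic polynomial in `t`; hence `B` is that polynomial evaluated at `A`. At a vertex
`p ^ i` with `i ≥ 1` the diagonal entries of `A` and `A²` are `0` and `1`.
-/

open Matrix Polynomial
open scoped MatrixOrder

section CFC

variable {A : Type*} [Ring A] [StarRing A] [TopologicalSpace A] [Algebra ℝ A]
  [ContinuousFunctionalCalculus ℝ A IsSelfAdjoint]

theorem cfc_eq_aeval_of_aeval_eq_zero {a : A} {q p : ℝ[X]} (hq : aeval a q = 0) {f : ℝ → ℝ}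
    (hf : ∀ t, q.IsRoot t → f t = p.eval t) (ha : IsSelfAdjoint a := by cfc_tac) :
    cfc f a = aeval a p := by
  cases subsingleton_or_nontrivial A
  · exact Subsingleton.elim _ _
  rw [← cfc_polynomial p a]
  refine cfc_congr fun t ht => hf t ?_
  have := spectrum.subset_polynomial_aeval a q ⟨t, ht, rfl⟩
  rwa [hq, spectrum.zero_eq, Set.mem_singleton_iff] at this

variable [PartialOrder A] [StarOrderedRing A] [NonnegSpectrumClass ℝ A]
  [IsTopologicalRing A] [T2Space A]

theorem CFC.eq_abs_of_sq_eq {a b : A} (h : b ^ 2 = a ^ 2) (hb : 0 ≤ b := by cfc_tac)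
    (ha : IsSelfAdjoint a := by cfc_tac) : b = CFC.abs a :=
  (CFC.sqrt_unique (by rw [← sq, h, sq, ha.star_eq]) hb).symm

theorem CFC.abs_sub_algebraMap (a : A) (μ : ℝ) (ha : IsSelfAdjoint a := by cfc_tac) :
    CFC.abs (a - algebraMap ℝ A μ) = cfc (fun t => |t - μ|) a := by
  have hsub : a - algebraMap ℝ A μ = cfc (fun t => t - μ) a := by
    rw [cfc_sub .., cfc_id' .., cfc_const ..]
  rw [CFC.abs_eq_cfc_norm _, hsub, ← cfc_comp' ..]
  rfl

end CFC

/-- The roots of `t (t² - t - c)` are `0` and `(1 ± s) / 2`. -/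
theorem abs_sub_eq_of_mul_quadratic_eq_zero {c μ s t : ℝ} (hc : 0 < c) (hs : 0 ≤ s)
    (hs2 : s ^ 2 = 4 * c + 1) (hμ0 : 0 ≤ μ) (hμ1 : μ ≤ 1) (ht : t * (t ^ 2 - t - c) = 0) :
    |t - μ| = μ + ((s - (1 - 2 * μ) / s) / 2 - μ) / c * (t ^ 2 - t) + (1 - 2 * μ) / s * t := by
  have hs1 : 1 ≤ s := by nlinarith
  rcases mul_eq_zero.1 ht with rfl | ht
  · simp [abs_of_nonneg hμ0]
  have hroot : 2 * t - 1 = s ∨ 2 * t - 1 = -s :=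
    sq_eq_sq_iff_eq_or_eq_neg.1 (by linear_combination 4 * ht - hs2)
  rw [show t ^ 2 - t = c by linarith]
  rcases hroot with hroot | hroot
  · rw [abs_of_nonneg (by linarith)]
    field_simp
    linear_combination (2 * μ + s - 1) * hroot
  · rw [abs_of_nonpos (by linarith)]
    field_simp
    linear_combination (2 * μ - s - 1) * hroot

section LoopedStar

variable {ι R : Type*} [CommRing R]

/-- For `e` the indicator of a centre and `f` that of the leaves, this is the adjacency matrix of
a star with a loop at its centre. -/
def Matrix.loopedStar (e f : ι → R) : Matrix ι ι R :=
  vecMulVec e e + vecMulVec e f + vecMulVec f e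

variable {e f : ι → R} {c : R}

theorem Matrix.loopedStar_transpose (e f : ι → R) : (loopedStar e f)ᵀ = loopedStar e f := by
  simp only [loopedStar, transpose_add, transpose_vecMulVec]
  abel

theorem Matrix.isSelfAdjoint_loopedStar [StarRing R] [TrivialStar R] (e f : ι → R) :
    IsSelfAdjoint (loopedStar e f) := by
  rw [IsSelfAdjoint, star_eq_conjTranspose, conjTranspose_eq_transpose_of_trivial,
    loopedStar_transpose]

theorem Matrix.loopedStar_apply_self_of_eq_zero {v : ι} (hv : e v = 0) :
    loopedStar e f v v = 0 := by
  simp [loopedStar, vecMulVec_apply, hv]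

variable [Fintype ι] [DecidableEq ι]

theorem Matrix.loopedStar_sq (hee : e ⬝ᵥ e = 1) (hef : e ⬝ᵥ f = 0) (hff : f ⬝ᵥ f = c) :
    loopedStar e f ^ 2 =
      (c + 1) • vecMulVec e e + vecMulVec e f + vecMulVec f e + vecMulVec f f := by
  have hfe : f ⬝ᵥ e = 0 := by rw [dotProduct_comm, hef]
  simp only [loopedStar, sq, add_mul, mul_add, vecMulVec_mul_vecMulVec, hee, hef, hfe, hff,
    zero_smul, one_smul, vecMulVec_smul, vecMulVec_zero]
  module

theorem Matrix.loopedStar_pow_three (hee : e ⬝ᵥ e = 1) (hef : e ⬝ᵥ f = 0) (hff : f ⬝ᵥ f = c) :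
    loopedStar e f ^ 3 = loopedStar e f ^ 2 + c • loopedStar e f := by
  have hfe : f ⬝ᵥ e = 0 := by rw [dotProduct_comm, hef]
  rw [pow_succ, loopedStar_sq hee hef hff]
  simp only [loopedStar, add_mul, mul_add, smul_mul_assoc, vecMulVec_mul_vecMulVec, hee, hef,
    hfe, hff, zero_smul, one_smul, vecMulVec_smul, vecMulVec_zero, smul_add]
  module

theorem Matrix.loopedStar_sq_apply_self_of_eq_zero (hee : e ⬝ᵥ e = 1) {v : ι} (hv : e v = 0) :
    (loopedStar e f ^ 2) v v = f v ^ 2 := by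
  simp only [sq, mul_apply, loopedStar, Matrix.add_apply, vecMulVec_apply, hv, zero_mul,
    zero_add, add_zero, mul_zero]
  rw [← mul_one (f v * f v), ← hee, dotProduct, Finset.mul_sum]
  exact Finset.sum_congr rfl fun x _ => by ring

end LoopedStar

section Energy

variable {ι : Type*} [Fintype ι] [DecidableEq ι] {e f : ι → ℝ} {c μ : ℝ}

theorem Matrix.PosSemidef.apply_self_eq_of_sq_eq_loopedStar_sub_sq {B : Matrix ι ι ℝ}
    (hB : B.PosSemidef) (hee : e ⬝ᵥ e = 1) (hef : e ⬝ᵥ f = 0) (hff : f ⬝ᵥ f = c) (hc : 0 < c)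
    (hμ0 : 0 ≤ μ) (hμ1 : μ ≤ 1) (hBsq : B ^ 2 = (loopedStar e f - μ • 1) ^ 2) {v : ι}
    (hv : e v = 0) :
    B v v = μ + ((√(4 * c + 1) - (1 - 2 * μ) / √(4 * c + 1)) / 2 - μ) / c * f v ^ 2 := by
  set s := √(4 * c + 1)
  have hs2 : s ^ 2 = 4 * c + 1 := Real.sq_sqrt (by positivity)
  have hsa : IsSelfAdjoint (loopedStar e f) := isSelfAdjoint_loopedStar e f
  have hB' : B = cfc (fun t => |t - μ|) (loopedStar e f) := by
    rw [← CFC.abs_sub_algebraMap _ μ, Algebra.algebraMap_eq_smul_one]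
    exact CFC.eq_abs_of_sq_eq hBsq hB.nonneg
  rw [hB', cfc_eq_aeval_of_aeval_eq_zero (q := X ^ 3 - X ^ 2 - C c * X)
    (p := C μ + C (((s - (1 - 2 * μ) / s) / 2 - μ) / c) * (X ^ 2 - X) +
      C ((1 - 2 * μ) / s) * X)]
  · simp only [map_add, map_sub, map_mul, map_pow, aeval_C, aeval_X, ← Algebra.smul_def,
      Matrix.add_apply, Matrix.sub_apply, Matrix.smul_apply, algebraMap_matrix_apply, if_pos,
      loopedStar_sq_apply_self_of_eq_zero hee hv, loopedStar_apply_self_of_eq_zero hv,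
      Algebra.algebraMap_self, RingHom.id_apply, smul_eq_mul]
    ring
  · simp only [map_sub, map_mul, map_pow, aeval_C, aeval_X, ← Algebra.smul_def,
      loopedStar_pow_three hee hef hff, add_sub_cancel_left, sub_self]
  · intro t ht
    simpa using abs_sub_eq_of_mul_quadratic_eq_zero hc (Real.sqrt_nonneg _) hs2 hμ0 hμ1
      (by
        simp only [IsRoot.def, eval_sub, eval_pow, eval_X, eval_mul, eval_C] at ht
        linear_combination ht)

end Energy

section Single

variable {ι R : Type*} [Fintype ι] [DecidableEq ι] [CommRing R] (o : ι)

theorem single_dotProduct_one_sub_single :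
    Pi.single o (1 : R) ⬝ᵥ (1 - Pi.single o 1) = 0 := by
  simp [dotProduct_sub]

theorem one_sub_single_dotProduct_self :
    (1 - Pi.single o 1 : ι → R) ⬝ᵥ (1 - Pi.single o 1) = (Fintype.card ι : R) - 1 := by
  simp [dotProduct_sub, sub_dotProduct]

end Single

theorem Nat.card_divisors_prime_pow {p : ℕ} (hp : p.Prime) (k : ℕ) :
    (p ^ k).divisors.card = k + 1 := by
  rw [Nat.divisors_prime_pow hp, Finset.card_map, Finset.card_range]

theorem Nat.coprime_iff_of_dvd_prime_pow {p a u v : ℕ} (hp : p.Prime) (hu : u ∣ p ^ a)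
    (hv : v ∣ p ^ a) : u.Coprime v ↔ u = 1 ∨ v = 1 := by
  refine ⟨fun h => ?_, by rintro (rfl | rfl) <;> simp⟩
  obtain ⟨k, -, rfl⟩ := (Nat.dvd_prime_pow hp).1 hu
  obtain ⟨l, -, rfl⟩ := (Nat.dvd_prime_pow hp).1 hv
  by_contra! hkl
  rw [Nat.coprime_pow_left_iff (Nat.pos_of_ne_zero (by rintro rfl; simp at hkl)),
    Nat.coprime_pow_right_iff (Nat.pos_of_ne_zero (by rintro rfl; simp at hkl)),
    Nat.coprime_self] at h
  exact hp.ne_one h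

theorem coprime_adjacency_prime_pow_eq_loopedStar {R : Type*} [CommRing R] {p a : ℕ}
    (hp : p.Prime) (o : {d : ℕ // d ∈ (p ^ a).divisors}) (ho : (o : ℕ) = 1) :
    (of fun u v : {d : ℕ // d ∈ (p ^ a).divisors} => if Nat.gcd u v = 1 then (1 : R) else 0) =
      loopedStar (Pi.single o 1) (1 - Pi.single o 1) := by
  ext u v
  have huv := Nat.coprime_iff_of_dvd_prime_pow hp (Nat.dvd_of_mem_divisors u.2)
    (Nat.dvd_of_mem_divisors v.2)
  rw [← ho, ← Subtype.ext_iff, ← Subtype.ext_iff] at huv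
  simp only [of_apply, ← Nat.coprime_iff_gcd_eq_one, huv, loopedStar, Matrix.add_apply,
    vecMulVec_apply]
  by_cases hu : u = o <;> by_cases hv : v = o <;> simp [hu, hv]

theorem pendant_energy_closed_form {c : ℝ} (hc : 0 < c) :
    1 / (c + 1) +
        ((√(4 * c + 1) - (1 - 2 * (1 / (c + 1))) / √(4 * c + 1)) / 2 - 1 / (c + 1)) / c =
      (2 * c ^ 2 + 2 * c + 1) / (c * (c + 1) * √(4 * c + 1)) + (c - 1) / (c * (c + 1)) := by
  have hs2 : √(4 * c + 1) ^ 2 = 4 * c + 1 := Real.sq_sqrt (by positivity)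
  have hs0 : 0 < √(4 * c + 1) := Real.sqrt_pos.2 (by positivity)
  generalize √(4 * c + 1) = s at hs2 hs0 ⊢
  field_simp
  linear_combination (c + 1) * hs2

/-- The vertex energy of each vertex `p ^ i` (`1 ≤ i ≤ a`) in the modified divisor
prime graph of `p ^ a`: if `B` is positive semidefinite with `B² = (A - μI)²`,
`μ = 1/(a+1)`, then the diagonal entry of `B` at the vertex `p ^ i` equals
`(2a² + 2a + 1)/(a(a+1)√(4a+1)) + (a-1)/(a(a+1))`. -/
theorem vertexEnergy_pendant_modifiedDivisorPrimeGraph_primePow (p a : ℕ) (hp : p.Prime)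
    (ha : 0 < a)
    (A B : Matrix {d : ℕ // d ∈ (p ^ a).divisors} {d : ℕ // d ∈ (p ^ a).divisors} ℝ)
    (hA : ∀ u v : {d : ℕ // d ∈ (p ^ a).divisors},
      A u v = if Nat.gcd u.1 v.1 = 1 then 1 else 0)
    (hB : B.PosSemidef)
    (hBsq : B ^ 2 = (A - (1 / ((a : ℝ) + 1)) • 1) ^ 2)
    (i : ℕ) (hi1 : 1 ≤ i) (hia : i ≤ a) :
    B ⟨p ^ i, Nat.mem_divisors.mpr ⟨pow_dvd_pow p hia, pow_ne_zero a hp.ne_zero⟩⟩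
        ⟨p ^ i, Nat.mem_divisors.mpr ⟨pow_dvd_pow p hia, pow_ne_zero a hp.ne_zero⟩⟩ =
      (2 * (a : ℝ) ^ 2 + 2 * (a : ℝ) + 1) /
          ((a : ℝ) * ((a : ℝ) + 1) * Real.sqrt (4 * (a : ℝ) + 1)) +
        ((a : ℝ) - 1) / ((a : ℝ) * ((a : ℝ) + 1)) := by
  set o : {d : ℕ // d ∈ (p ^ a).divisors} :=
    ⟨1, Nat.one_mem_divisors.2 (pow_ne_zero a hp.ne_zero)⟩
  have hA' : A = loopedStar (Pi.single o 1) (1 - Pi.single o 1) := by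
    rw [← coprime_adjacency_prime_pow_eq_loopedStar hp o rfl]
    ext u v
    exact hA u v
  set v : {d : ℕ // d ∈ (p ^ a).divisors} :=
    ⟨p ^ i, Nat.mem_divisors.mpr ⟨pow_dvd_pow p hia, pow_ne_zero a hp.ne_zero⟩⟩
  have hleaf : (Pi.single o 1 : _ → ℝ) v = 0 := by
    refine Pi.single_eq_of_ne (fun h => ?_) 1
    exact (Nat.one_lt_pow (n := i) (by omega) hp.one_lt).ne' (congrArg Subtype.val h)
  have haR : (0 : ℝ) < a := by exact_mod_cast ha
  have hff : (1 - Pi.single o 1 : _ → ℝ) ⬝ᵥ (1 - Pi.single o 1) = a := by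
    rw [one_sub_single_dotProduct_self, Fintype.card_coe, Nat.card_divisors_prime_pow hp]
    push_cast
    ring
  rw [hA'] at hBsq
  rw [hB.apply_self_eq_of_sq_eq_loopedStar_sub_sq (by simp) (single_dotProduct_one_sub_single o)
    hff haR (by positivity) (by rw [div_le_one (by positivity)]; linarith) hBsq hleaf]
  simp only [Pi.sub_apply, Pi.one_apply, hleaf, sub_zero, one_pow, mul_one]
  exact pendant_energy_closed_form haR
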